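/- arXiv:1007.3021 — 4 statements merged into one kernel-verified Lean document; each statement's English description precedes it below -/
import Mathlib

section
/- The language IP_* is context-free but does not belong to REG/Rn; hence CFL ⊄ REG/Rn. -/
open scoped BigOperators

/-- A rational one-way probabilistic finite automaton over alphabet `Λ`
(with endmarker matrices `matC` for ¢ and `matD` for $). -/
structure PFA (Λ : Type) where
  Q : Type
  fin : Fintype Q
  dec : DecidableEq Q
  start : Q
  final : Finset Q
  matC : Matrix Q Q ℚ
  matD : Matrix Q Q ℚ
  mat : Λ → Matrix Q Q ℚ
  nonnegC : ∀ i j, 0 ≤ matC i j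
  nonnegD : ∀ i j, 0 ≤ matD i j
  nonnegMat : ∀ σ i j, 0 ≤ mat σ i j
  rowC : ∀ i, ∑ j ∈ fin.elems, matC i j = 1
  rowD : ∀ i, ∑ j ∈ fin.elems, matD i j = 1
  rowMat : ∀ σ i, ∑ j ∈ fin.elems, mat σ i j = 1

/-- Acceptance probability of a 1pfa on an input string. -/
def PFA.accProb {Λ : Type} (M : PFA Λ) (x : List Λ) : ℚ :=
  letI := M.fin
  letI := M.dec
  ∑ q ∈ M.final,
    (Matrix.vecMul
      (x.foldl (fun v σ => Matrix.vecMul v (M.mat σ))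
        (Matrix.vecMul (Pi.single M.start 1) M.matC))
      M.matD) q

/-- `D` is a probability distribution on `Γ^n`. -/
def IsDist {Γ : Type} [Fintype Γ] {n : ℕ} (D : List.Vector Γ n → ℝ) : Prop :=
  (∀ y, 0 ≤ D y) ∧ ∑ y, D y = 1

open Classical in
/-- Probability, under randomized advice `D`, that the track string `[x//y]` lies in `L`. -/
noncomputable def randAccProb {Alp Γ : Type} [Fintype Γ] (L : Set (List (Alp × Γ)))
    {n : ℕ} (D : List.Vector Γ n → ℝ) (x : List Alp) : ℝ :=
  ∑ y : List.Vector Γ n, if x.zip y.toList ∈ L then D y else 0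

/-- `S ∈ REG/n`. -/
def InREGn {Alp : Type} (S : Set (List Alp)) : Prop :=
  ∃ (Γ : Type) (_ : Fintype Γ) (h : ℕ → List Γ), (∀ n, (h n).length = n) ∧
    ∃ (Q : Type) (_ : Fintype Q) (M : DFA (Alp × Γ) Q),
      ∀ x : List Alp, x ∈ S ↔ x.zip (h x.length) ∈ M.accepts

/-- `S ∈ REG/Rn` (bounded error, randomized advice). -/
def InREGRn {Alp : Type} (S : Set (List Alp)) : Prop :=
  ∃ (Γ : Type) (iΓ : Fintype Γ),
    letI := iΓ
    ∃ (Q : Type) (_ : Fintype Q) (M : DFA (Alp × Γ) Q) (ε : ℝ),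
      0 ≤ ε ∧ ε < 1 / 2 ∧
        ∃ D : (n : ℕ) → List.Vector Γ n → ℝ, (∀ n, IsDist (D n)) ∧
          ∀ (n : ℕ) (x : List Alp), x.length = n →
            (x ∈ S → 1 - ε ≤ randAccProb M.accepts (D n) x) ∧
            (x ∉ S → randAccProb M.accepts (D n) x ≤ ε)

/-- `S ∈ CFL/n`. -/
def InCFLn {Alp : Type} (S : Set (List Alp)) : Prop :=
  ∃ (Γ : Type) (_ : Fintype Γ) (h : ℕ → List Γ), (∀ n, (h n).length = n) ∧
    ∃ L : Language (Alp × Γ), L.IsContextFree ∧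
      ∀ x : List Alp, x ∈ S ↔ x.zip (h x.length) ∈ L

/-- `S ∈ CFL/Rn` (bounded error, randomized advice). -/
def InCFLRn {Alp : Type} (S : Set (List Alp)) : Prop :=
  ∃ (Γ : Type) (iΓ : Fintype Γ),
    letI := iΓ
    ∃ (L : Language (Alp × Γ)), L.IsContextFree ∧
      ∃ (ε : ℝ), 0 ≤ ε ∧ ε < 1 / 2 ∧
        ∃ D : (n : ℕ) → List.Vector Γ n → ℝ, (∀ n, IsDist (D n)) ∧
          ∀ (n : ℕ) (x : List Alp), x.length = n →
            (x ∈ S → 1 - ε ≤ randAccProb L (D n) x) ∧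
            (x ∉ S → randAccProb L (D n) x ≤ ε)

/-- `A ∈ 1C=LIN/lin` via the paper's 1pfa characterization. -/
def InOneCeqLin {Alp : Type} (A : Set (List Alp)) : Prop :=
  ∃ (Γ : Type) (_ : Fintype Γ) (h : ℕ → List Γ), (∀ n, (h n).length = n) ∧
    ∃ M : PFA (Alp × Γ),
      ∀ x : List Alp, x ∈ A ↔ M.accProb (x.zip (h x.length)) = 1 / 2

/-- `A ∈ 1PLIN/lin` via the paper's 1pfa characterization. -/
def InOnePLin {Alp : Type} (A : Set (List Alp)) : Prop :=
  ∃ (Γ : Type) (_ : Fintype Γ) (h : ℕ → List Γ), (∀ n, (h n).length = n) ∧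
    ∃ M : PFA (Alp × Γ),
      ∀ x : List Alp, x ∈ A ↔ 1 / 2 < M.accProb (x.zip (h x.length))

open Classical in
/-- `(A, μ) ∈ aver-REG/n`. -/
def InAverREGn {Alp : Type} [Fintype Alp] (A : Set (List Alp))
    (μ : (n : ℕ) → List.Vector Alp n → ℝ) : Prop :=
  ∃ (Γ : Type) (_ : Fintype Γ) (h : ℕ → List Γ), (∀ n, (h n).length = n) ∧
    ∃ (Q : Type) (_ : Fintype Q) (M : DFA (Alp × Γ) Q) (ε : ℝ),
      0 ≤ ε ∧ ε < 1 / 2 ∧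
        ∀ n : ℕ, 1 - ε ≤ ∑ x : List.Vector Alp n,
          if (x.toList.zip (h n) ∈ M.accepts ↔ x.toList ∈ A) then μ n x else 0

/-- The language `Dup = {ww : w ∈ {0,1}*}`. -/
def Dup : Set (List Bool) := {z | ∃ w : List Bool, z = w ++ w}

/-- The marked palindrome language `Pal_# = {w#w^R}` over the alphabet
`Option Bool` (with `none` playing the role of the marker `#`). -/
def PalHash : Set (List (Option Bool)) :=
  {z | ∃ w : List Bool, z = w.map some ++ none :: (w.reverse.map some)}

/-- Inner product (number of common `true` positions) of two bit strings. -/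
def innerProd (u v : List Bool) : ℕ :=
  ((u.zip v).filter fun p => p.1 && p.2).length

/-- The language `IP_* = {axy : a ∈ {λ,0,1}, |x| = |y|, x^R ⊙ y ≡ 0 (mod 2)}`. -/
def IPstar : Language Bool :=
  {z | ∃ a x y : List Bool, (a = [] ∨ a = [false] ∨ a = [true]) ∧
    z = a ++ x ++ y ∧ x.length = y.length ∧ innerProd x.reverse y % 2 = 0}

/-- A negligible function. -/
def Negligible (f : ℕ → ℝ) : Prop :=
  ∀ k : ℕ, 0 < k → ∃ N : ℕ, ∀ n ≥ N, f n ≤ 1 / (n : ℝ) ^ k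

/-- `L` is `REG/n`-pseudorandom. -/
def RegPseudorandom {Alp : Type} [Fintype Alp] (L : Set (List Alp)) : Prop :=
  ∀ B : Set (List Alp), InREGn B →
    Negligible fun n =>
      |(((symmDiff B L) ∩ {x | x.length = n}).ncard : ℝ) /
        (Fintype.card Alp : ℝ) ^ n - 1 / 2|

/-!
The grammar for `IP_*` grows `x y` (with `|x| = |y|`) from the middle outwards; its nonterminals
record the parity of `x^R ⊙ y`, and wrapping `w` as `b w c` adds `b ∧ c` to that parity.

For the lower bound, fix an advice string and cut each input `x^R z` (`x z ∈ {0,1}^n`) after its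
first half. A DFA with `K` states then computes a `±1` function of `(class of x, z)` for some
partition of the `x`'s into `K` classes. The rows `x ↦ ((-1)^(x ⊙ z))_z` of the inner-product
sign matrix are orthogonal, so Cauchy–Schwarz bounds the correlation of any such function with
it by `√(K · 2^n · 4^n)` (Lindsey's lemma). Bounded error `ε` forces an average correlation of at
least `(1 - 2ε) · 4^n` over the advice, which is larger once `2^n > K / (1 - 2ε)^2`.
-/

open Finset

theorem innerProd_append {u v : List Bool} (h : u.length = v.length) (u' v' : List Bool) :
    innerProd (u ++ u') (v ++ v') = innerProd u v + innerProd u' v' := by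
  simp [innerProd, List.zip_append h]

theorem innerProd_reverse_cons_append (b c : Bool) {x y : List Bool} (h : x.length = y.length) :
    innerProd (b :: x).reverse (y ++ [c]) = innerProd x.reverse y + (b && c).toNat := by
  rw [List.reverse_cons, innerProd_append (by simp [h])]
  cases b <;> cases c <;> rfl

namespace ContextFreeGrammar

variable {T N : Type*}

def sententialLanguage (I : N → Language T) (u : List (Symbol T N)) : Language T :=
  (u.map fun
    | .terminal t => {[t]}
    | .nonterminal n => I n).prod

theorem sententialLanguage_append (I : N → Language T) (u v : List (Symbol T N)) :
    sententialLanguage I (u ++ v) = sententialLanguage I u * sententialLanguage I v := by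
  simp [sententialLanguage]

theorem mem_sententialLanguage_map_terminal (I : N → Language T) (w : List T) :
    w ∈ sententialLanguage I (w.map .terminal) := by
  induction w with
  | nil => exact (Language.mem_one _).2 rfl
  | cons t w ih => exact ⟨[t], rfl, w, ih, rfl⟩

variable {g : ContextFreeGrammar T} {I : g.NT → Language T}

theorem Derives.sententialLanguage_le
    (hI : ∀ r ∈ g.rules, sententialLanguage I r.output ≤ I r.input)
    {u v : List (Symbol T g.NT)} (h : g.Derives u v) :
    sententialLanguage I v ≤ sententialLanguage I u := by
  induction h with
  | refl => exact le_rfl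
  | tail _ hstep ih =>
    obtain ⟨r, hr, hrw⟩ := hstep
    obtain ⟨p, q, rfl, rfl⟩ := hrw.exists_parts
    refine le_trans ?_ ih
    simp only [sententialLanguage_append]
    gcongr
    simpa [sententialLanguage] using hI r hr

theorem language_le_of_rules_le (hI : ∀ r ∈ g.rules, sententialLanguage I r.output ≤ I r.input) :
    g.language ≤ I g.initial := fun w hw => by
  simpa [sententialLanguage] using
    hw.sententialLanguage_le hI (mem_sententialLanguage_map_terminal I w)

end ContextFreeGrammar

open ContextFreeGrammar

def ipParityLanguage (q : ZMod 2) : Language Bool :=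
  {w | ∃ x y : List Bool, w = x ++ y ∧ x.length = y.length ∧ (innerProd x.reverse y : ZMod 2) = q}

/-- `none` is the start symbol; `some q` generates `ipParityLanguage q`. -/
def ipRules : Finset (ContextFreeRule Bool (Option (ZMod 2))) :=
  {⟨none, [.nonterminal (some 0)]⟩, ⟨some 0, []⟩} ∪
    univ.image (fun a : Bool => ⟨none, [.terminal a, .nonterminal (some 0)]⟩) ∪
    univ.image (fun p : ZMod 2 × Bool × Bool =>
      ⟨some (p.1 + (p.2.1 && p.2.2).toNat),
        [.terminal p.2.1, .nonterminal (some p.1), .terminal p.2.2]⟩)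

abbrev ipGrammar : ContextFreeGrammar Bool := ⟨Option (ZMod 2), none, ipRules⟩

def ipInterpretation : Option (ZMod 2) → Language Bool
  | none => IPstar
  | some q => ipParityLanguage q

theorem ipGrammar_rules_sound : ∀ r ∈ ipGrammar.rules,
    sententialLanguage ipInterpretation r.output ≤ ipInterpretation r.input := by
  have heven (k : ℕ) : (k : ZMod 2) = 0 ↔ k % 2 = 0 :=
    ZMod.natCast_eq_zero_iff_even.trans Nat.even_iff
  intro r hr
  change r ∈ ipRules at hr
  rw [ipRules] at hr
  simp only [mem_union, mem_insert, mem_singleton, mem_image, mem_univ, true_and] at hr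
  rcases hr with ((rfl | rfl) | ⟨a, rfl⟩) | ⟨⟨q, b, c⟩, rfl⟩
  · rintro _ ⟨w, ⟨x, y, rfl, hxy, hq⟩, _, rfl, rfl⟩
    exact ⟨[], x, y, .inl rfl, by simp, hxy, (heven _).1 hq⟩
  · rintro _ rfl
    exact ⟨[], [], rfl, rfl, by simp [innerProd]⟩
  · rintro _ ⟨_, rfl, _, ⟨w, ⟨x, y, rfl, hxy, hq⟩, _, rfl, rfl⟩, rfl⟩
    exact ⟨[a], x, y, by cases a <;> simp, by simp, hxy, (heven _).1 hq⟩
  · rintro _ ⟨_, rfl, _, ⟨_, ⟨x, y, rfl, hxy, rfl⟩, _, ⟨_, rfl, _, rfl, rfl⟩, rfl⟩, rfl⟩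
    refine ⟨b :: x, y ++ [c], by simp, by simp [hxy], ?_⟩
    rw [innerProd_reverse_cons_append b c hxy]
    push_cast
    ring

theorem ipGrammar_derives_parity (x y : List Bool) (h : x.length = y.length) :
    ipGrammar.Derives [.nonterminal (some (innerProd x.reverse y : ZMod 2))]
      ((x ++ y).map .terminal) := by
  induction x generalizing y with
  | nil =>
    obtain rfl : y = [] := List.length_eq_zero_iff.1 h.symm
    exact Produces.single ⟨⟨some 0, []⟩, by simp [ipRules], ContextFreeRule.Rewrites.input_output⟩
  | cons b x ih =>
    obtain ⟨y, c, rfl⟩ : ∃ y' c, y = y' ++ [c] := by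
      rcases y.eq_nil_or_concat with rfl | ⟨y', c, rfl⟩
      · simp at h
      · exact ⟨y', c, by simp⟩
    have hxy : x.length = y.length := by simpa using h
    have hrule : (⟨some ((innerProd x.reverse y : ZMod 2) + (b && c).toNat),
        [.terminal b, .nonterminal (some (innerProd x.reverse y : ZMod 2)), .terminal c]⟩ :
          ContextFreeRule Bool (Option (ZMod 2))) ∈ ipGrammar.rules :=
      mem_union_right _ (mem_image_of_mem _ (mem_univ (_, b, c)))
    rw [innerProd_reverse_cons_append b c hxy, Nat.cast_add]
    refine Produces.trans_derives ⟨_, hrule, ContextFreeRule.Rewrites.input_output⟩ ?_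
    simpa using ((ih y hxy).append_right [.terminal c]).append_left [.terminal b]

theorem IPstar_le_ipGrammar_language : IPstar ≤ ipGrammar.language := by
  intro z ⟨a, x, y, ha, hz, hxy, hq⟩
  subst hz
  have hE := ipGrammar_derives_parity x y hxy
  rw [ZMod.natCast_eq_zero_iff_even.2 (Nat.even_iff.2 hq)] at hE
  refine (mem_language_iff _ _).2 ?_
  obtain rfl | ⟨b, rfl⟩ : a = [] ∨ ∃ b, a = [b] := by rcases ha with h | h | h <;> simp [h]
  · exact Produces.trans_derives ⟨⟨none, [.nonterminal (some 0)]⟩, by simp [ipRules],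
      ContextFreeRule.Rewrites.input_output⟩ (by simpa using hE)
  · refine Produces.trans_derives ⟨⟨none, [.terminal b, .nonterminal (some 0)]⟩,
      by simp [ipRules], ContextFreeRule.Rewrites.input_output⟩ ?_
    simpa using hE.append_left [.terminal b]

theorem isContextFree_IPstar : IPstar.IsContextFree :=
  ⟨ipGrammar, le_antisymm (language_le_of_rules_le ipGrammar_rules_sound)
    IPstar_le_ipGrammar_language⟩

section Discrepancy

variable {X Z Q : Type*} [Fintype X] [Fintype Z] [Fintype Q] [DecidableEq X] [DecidableEq Q]

theorem sum_sq_sum_fiberwise_of_orthogonal (s : X → Z → ℝ) (N : ℝ)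
    (hs : ∀ x x', ∑ z, s x z * s x' z = if x = x' then N else 0) (f : X → Q) :
    ∑ q, ∑ z, (∑ x with f x = q, s x z) ^ 2 = Fintype.card X * N := by
  have hfiber (q : Q) : ∑ z, (∑ x with f x = q, s x z) ^ 2 = #{x | f x = q} * N := by
    simp_rw [sq, sum_mul_sum]
    rw [sum_comm]
    simp_rw [sum_comm (s := univ (α := Z)), hs]
    simp only [sum_ite_eq, mem_filter, mem_univ, true_and]
    rw [sum_ite_of_true fun x hx => (mem_filter.1 hx).2, sum_const, nsmul_eq_mul]
  simp_rw [hfiber, ← sum_mul]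
  rw [← Nat.cast_sum, ← card_eq_sum_card_fiberwise (fun x _ => mem_univ (f x)), card_univ]

theorem sum_sum_mul_le_sqrt_of_orthogonal (s : X → Z → ℝ) (N : ℝ)
    (hs : ∀ x x', ∑ z, s x z * s x' z = if x = x' then N else 0)
    (f : X → Q) (β : Q → Z → ℝ) (hβ : ∀ q z, |β q z| ≤ 1) :
    ∑ x, ∑ z, β (f x) z * s x z
      ≤ √(Fintype.card Q * Fintype.card Z * (Fintype.card X * N)) := by
  set S : Q → Z → ℝ := fun q z => ∑ x with f x = q, s x z
  have hregroup : ∑ x, ∑ z, β (f x) z * s x z = ∑ p : Q × Z, β p.1 p.2 * S p.1 p.2 := by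
    rw [← sum_fiberwise univ f, Fintype.sum_prod_type]
    refine sum_congr rfl fun q _ => ?_
    rw [sum_comm]
    simp_rw [S, mul_sum]
    exact sum_congr rfl fun z _ => sum_congr rfl fun x hx => by rw [(mem_filter.1 hx).2]
  have hcs : (∑ p : Q × Z, |S p.1 p.2|) ^ 2
      ≤ Fintype.card Q * Fintype.card Z * (Fintype.card X * N) := by
    refine (sq_sum_le_card_mul_sum_sq (s := univ)).trans_eq ?_
    simp_rw [sq_abs, Fintype.sum_prod_type, card_univ, Fintype.card_prod, Nat.cast_mul]
    rw [sum_sq_sum_fiberwise_of_orthogonal s N hs f]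
  calc ∑ x, ∑ z, β (f x) z * s x z = ∑ p : Q × Z, β p.1 p.2 * S p.1 p.2 := hregroup
    _ ≤ ∑ p : Q × Z, |S p.1 p.2| := sum_le_sum fun p _ => (le_abs_self _).trans <| by
        rw [abs_mul]; exact mul_le_of_le_one_left (abs_nonneg _) (hβ _ _)
    _ ≤ _ := (le_abs_self _).trans (Real.abs_le_sqrt hcs)

end Discrepancy

theorem innerProd_cons (a b : Bool) (u v : List Bool) :
    innerProd (a :: u) (b :: v) = (a && b).toNat + innerProd u v := by
  cases a <;> cases b <;> simp [innerProd, Nat.add_comm]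

theorem innerProd_ofFn {n : ℕ} (x z : Fin n → Bool) :
    innerProd (List.ofFn x) (List.ofFn z) = ∑ i, (x i && z i).toNat := by
  induction n with
  | zero => rfl
  | succ n ih => rw [List.ofFn_succ, List.ofFn_succ, innerProd_cons, ih, Fin.sum_univ_succ]

theorem sum_neg_one_pow_innerProd_mul {n : ℕ} (x x' : Fin n → Bool) :
    ∑ z : Fin n → Bool, (-1 : ℝ) ^ innerProd (List.ofFn x) (List.ofFn z)
        * (-1) ^ innerProd (List.ofFn x') (List.ofFn z) = if x = x' then 2 ^ n else 0 := by
  have hcoord (a a' : Bool) : ∑ b : Bool, (-1 : ℝ) ^ (a && b).toNat * (-1) ^ (a' && b).toNat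
      = if a = a' then 2 else 0 := by
    cases a <;> cases a' <;> norm_num
  simp_rw [innerProd_ofFn, ← prod_pow_eq_pow_sum, ← prod_mul_distrib]
  rw [← Fintype.prod_sum (fun i b => (-1 : ℝ) ^ (x i && b).toNat * (-1) ^ (x' i && b).toNat)]
  simp_rw [hcoord, prod_ite_zero, prod_const, card_univ, Fintype.card_fin, mem_univ, true_implies,
    funext_iff]

theorem append_mem_IPstar_iff {u v : List Bool} (h : u.length = v.length) :
    u ++ v ∈ IPstar ↔ Even (innerProd u.reverse v) := by
  rw [Nat.even_iff]
  constructor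
  · rintro ⟨a, x, y, ha, huv, hxy, hpar⟩
    have hlen := congrArg List.length huv
    simp only [List.length_append] at hlen
    obtain rfl : a = [] := by
      rcases ha with rfl | rfl | rfl
      · rfl
      all_goals simp at hlen; omega
    obtain ⟨rfl, rfl⟩ := List.append_inj huv (by simp at hlen ⊢; omega)
    exact hpar
  · exact fun hpar => ⟨[], u, v, .inl rfl, rfl, h, hpar⟩

theorem DFA.append_zip_mem_accepts_iff {α Γ σ : Type*} (M : DFA (α × Γ) σ)
    {u v : List α} {w : List Γ} (h : u.length ≤ w.length) :
    (u ++ v).zip w ∈ M.accepts ↔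
      M.evalFrom (M.eval (u.zip (w.take u.length))) (v.zip (w.drop u.length)) ∈ M.accept := by
  conv_lhs => rw [← List.take_append_drop u.length w]
  rw [List.zip_append (by simpa using h), DFA.mem_accepts, DFA.eval, DFA.evalFrom_of_append]

open Classical in
theorem DFA.sum_sum_sign_mul_neg_one_pow_innerProd_le {Γ Q : Type*} [Fintype Q]
    (M : DFA (Bool × Γ) Q) {n : ℕ} {w : List Γ} (hw : n ≤ w.length) :
    ∑ x : Fin n → Bool, ∑ z : Fin n → Bool,
        (if ((List.ofFn x).reverse ++ List.ofFn z).zip w ∈ M.accepts then 1 else -1)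
          * (-1 : ℝ) ^ innerProd (List.ofFn x) (List.ofFn z)
      ≤ √(Fintype.card Q * 2 ^ n * (2 ^ n * 2 ^ n)) := by
  have := sum_sum_mul_le_sqrt_of_orthogonal _ (2 ^ n) sum_neg_one_pow_innerProd_mul
    (fun x => M.eval ((List.ofFn x).reverse.zip (w.take n)))
    (fun q z => if M.evalFrom q ((List.ofFn z).zip (w.drop n)) ∈ M.accept then 1 else -1)
    (fun q z => by split_ifs <;> simp)
  simp only [Fintype.card_fun, Fintype.card_bool, Fintype.card_fin, Nat.cast_pow,
    Nat.cast_ofNat] at this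
  convert this using 5 with x _ z _
  rw [DFA.append_zip_mem_accepts_iff M (by simpa using hw), List.length_reverse, List.length_ofFn]

open Classical in
theorem one_sub_two_mul_le_sign_mul_sum_sign {Alp Γ : Type} [Fintype Γ] {L : Set (List (Alp × Γ))}
    {S : Set (List Alp)} {n : ℕ} {D : List.Vector Γ n → ℝ} (hD : IsDist D) {x : List Alp} {ε : ℝ}
    (hmem : x ∈ S → 1 - ε ≤ randAccProb L D x) (hnmem : x ∉ S → randAccProb L D x ≤ ε) :
    1 - 2 * ε ≤
      (if x ∈ S then 1 else -1) * ∑ y, D y * if x.zip y.toList ∈ L then 1 else -1 := by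
  have hbias : ∑ y, D y * (if x.zip y.toList ∈ L then 1 else -1)
      = 2 * randAccProb L D x - ∑ y, D y := by
    rw [randAccProb, mul_sum, ← sum_sub_distrib]
    refine sum_congr rfl fun y _ => ?_
    split_ifs <;> ring
  rw [hbias, hD.2]
  by_cases hx : x ∈ S
  · simp only [hx, if_true]; linarith [hmem hx]
  · simp only [hx, if_false]; linarith [hnmem hx]

theorem mul_card_mul_card_le_of_forall_le_sum_mul {ι X Z : Type*} [Fintype ι] [Fintype X]
    [Fintype Z] {D : ι → ℝ} (hD₀ : ∀ i, 0 ≤ D i) (hD₁ : ∑ i, D i = 1) (t : X → Z → ℝ)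
    (o : ι → X → Z → ℝ) {c B : ℝ} (hc : ∀ x z, c ≤ t x z * ∑ i, D i * o i x z)
    (hB : ∀ i, ∑ x, ∑ z, o i x z * t x z ≤ B) :
    c * (Fintype.card X * Fintype.card Z) ≤ B :=
  calc c * (Fintype.card X * Fintype.card Z) = ∑ x : X, ∑ z : Z, c := by simp; ring
    _ ≤ ∑ x, ∑ z, t x z * ∑ i, D i * o i x z := sum_le_sum fun x _ => sum_le_sum fun z _ => hc x z
    _ = ∑ i, D i * ∑ x, ∑ z, o i x z * t x z := by
        simp_rw [mul_sum]
        symm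
        rw [sum_comm]
        refine sum_congr rfl fun x _ => ?_
        rw [sum_comm]
        exact sum_congr rfl fun z _ => sum_congr rfl fun i _ => by ring
    _ ≤ ∑ i, D i * B := sum_le_sum fun i _ => mul_le_mul_of_nonneg_left (hB i) (hD₀ i)
    _ = B := by rw [← sum_mul, hD₁, one_mul]

theorem not_inREGRn_IPstar : ¬ InREGRn IPstar := by
  rintro ⟨Γ, _, Q, _, M, ε, -, hε, D, hD, hM⟩
  classical
  obtain ⟨n, hn⟩ := pow_unbounded_of_one_lt (Fintype.card Q / (1 - 2 * ε) ^ 2) one_lt_two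
  rw [div_lt_iff₀ (by nlinarith)] at hn
  set word : (Fin n → Bool) → (Fin n → Bool) → List Bool :=
    fun x z => (List.ofFn x).reverse ++ List.ofFn z
  set sign : (Fin n → Bool) → (Fin n → Bool) → ℝ :=
    fun x z => (-1) ^ innerProd (List.ofFn x) (List.ofFn z)
  set out : List.Vector Γ (n + n) → (Fin n → Bool) → (Fin n → Bool) → ℝ :=
    fun w x z => if (word x z).zip w.toList ∈ M.accepts then 1 else -1
  have hbias (x z : Fin n → Bool) : 1 - 2 * ε ≤ sign x z * ∑ w, D (n + n) w * out w x z := by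
    have hlen : (word x z).length = n + n := by simp [word]
    have hsign : sign x z = if word x z ∈ IPstar then 1 else -1 := by
      simp only [sign, word, neg_one_pow_eq_ite, append_mem_IPstar_iff (u := (List.ofFn x).reverse)
        (v := List.ofFn z) (by simp), List.reverse_reverse]
    rw [hsign]
    exact one_sub_two_mul_le_sign_mul_sum_sign (hD _) (hM _ _ hlen).1 (hM _ _ hlen).2
  have hsum := mul_card_mul_card_le_of_forall_le_sum_mul (hD _).1 (hD _).2 sign out hbias
    fun w => M.sum_sum_sign_mul_neg_one_pow_innerProd_le (by simp)
  simp only [Fintype.card_fun, Fintype.card_bool, Fintype.card_fin, Nat.cast_pow,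
    Nat.cast_ofNat] at hsum
  have h2n : (0 : ℝ) < 2 ^ n := by positivity
  rw [Real.le_sqrt (by nlinarith [mul_pos h2n h2n]) (by positivity)] at hsum
  nlinarith [mul_pos (mul_pos h2n h2n) h2n]

theorem stmt14 : IPstar.IsContextFree ∧ ¬ InREGRn IPstar :=
  ⟨isContextFree_IPstar, not_inREGRn_IPstar⟩
end

section
/- If a language A over a finite alphabet Σ belongs to REG/Rn, then for every probability ensemble μ = {μ_n} over Σ*, the distributional problem (A, μ) belongs to aver-REG/n. -/
open scoped BigOperators

/-! Averaging over the random advice: if for every input `x` the advice `y ∼ D_n` makes `M`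
answer correctly with probability at least `1 - ε`, then the `D_n`-average over `y` of the
`μ_n`-probability of a correct answer is at least `1 - ε`, so some single advice string `y`
attains it. -/

section Averaging

variable {X Y : Type} [Fintype X] [Fintype Y]

theorem exists_le_of_le_sum_mul {D : Y → ℝ} (hD0 : ∀ y, 0 ≤ D y) (hD1 : ∑ y, D y = 1)
    {F : Y → ℝ} {c : ℝ} (h : c ≤ ∑ y, D y * F y) : ∃ y, c ≤ F y := by
  by_contra! hF
  obtain ⟨y₀, hy₀⟩ : ∃ y, 0 < D y := by
    by_contra! hD
    linarith [Finset.sum_nonpos fun y (_ : y ∈ Finset.univ) => hD y]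
  have : ∑ y, D y * F y < ∑ y, D y * c :=
    Finset.sum_lt_sum (fun y _ => mul_le_mul_of_nonneg_left (hF y).le (hD0 y))
      ⟨y₀, Finset.mem_univ _, mul_lt_mul_of_pos_left (hF y₀) hy₀⟩
  rw [← Finset.sum_mul, hD1, one_mul] at this
  linarith

theorem sum_mul_sum_ite_comm (μ : X → ℝ) (D : Y → ℝ) (P : X → Y → Prop)
    [∀ x y, Decidable (P x y)] :
    ∑ y, D y * ∑ x, (if P x y then μ x else 0) =
      ∑ x, μ x * ∑ y, (if P x y then D y else 0) := by
  simp only [Finset.mul_sum, mul_ite, mul_zero]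
  rw [Finset.sum_comm]
  simp only [mul_comm]

theorem exists_le_sum_ite_of_forall_le_sum_ite {μ : X → ℝ} (hμ0 : ∀ x, 0 ≤ μ x)
    (hμ1 : ∑ x, μ x = 1) {D : Y → ℝ} (hD0 : ∀ y, 0 ≤ D y) (hD1 : ∑ y, D y = 1)
    {P : X → Y → Prop} [∀ x y, Decidable (P x y)] {c : ℝ}
    (h : ∀ x, c ≤ ∑ y, if P x y then D y else 0) :
    ∃ y, c ≤ ∑ x, if P x y then μ x else 0 := by
  refine exists_le_of_le_sum_mul hD0 hD1 ?_
  calc c = ∑ x, μ x * c := by rw [← Finset.sum_mul, hμ1, one_mul]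
    _ ≤ ∑ x, μ x * ∑ y, (if P x y then D y else 0) :=
      Finset.sum_le_sum fun x _ => mul_le_mul_of_nonneg_left (h x) (hμ0 x)
    _ = _ := (sum_mul_sum_ite_comm μ D P).symm

theorem le_sum_ite_iff_of_bounded_error {D : Y → ℝ} (hD1 : ∑ y, D y = 1)
    {Q : Y → Prop} [DecidablePred Q] {p : Prop} [∀ y, Decidable (Q y ↔ p)] {ε : ℝ}
    (hyes : p → 1 - ε ≤ ∑ y, if Q y then D y else 0)
    (hno : ¬p → ∑ y, (if Q y then D y else 0) ≤ ε) :
    1 - ε ≤ ∑ y, if (Q y ↔ p) then D y else 0 := by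
  by_cases hp : p
  · simpa only [hp, iff_true] using hyes hp
  · have hsplit : ∑ y, (if (Q y ↔ p) then D y else 0) + ∑ y, (if Q y then D y else 0) = 1 := by
      rw [← Finset.sum_add_distrib, ← hD1]
      refine Finset.sum_congr rfl fun y _ => ?_
      by_cases hq : Q y <;> simp [hq, hp]
    linarith [hno hp]

end Averaging

theorem stmt16 (Alp : Type) [Fintype Alp] (A : Set (List Alp))
    (μ : (n : ℕ) → List.Vector Alp n → ℝ) (hμ : ∀ n, IsDist (μ n))
    (hA : InREGRn A) : InAverREGn A μ := by
  classical
  obtain ⟨Γ, iΓ, Q, iQ, M, ε, hε0, hε2, D, hD, hM⟩ := hA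
  have hadvice : ∀ n, ∃ y : List.Vector Γ n, 1 - ε ≤ ∑ x : List.Vector Alp n,
      if (x.toList.zip y.toList ∈ M.accepts ↔ x.toList ∈ A) then μ n x else 0 := fun n =>
    exists_le_sum_ite_of_forall_le_sum_ite (hμ n).1 (hμ n).2 (hD n).1 (hD n).2 fun x =>
      le_sum_ite_iff_of_bounded_error (hD n).2 (hM n x.toList x.toList_length).1
        (hM n x.toList x.toList_length).2
  choose y hy using hadvice
  exact ⟨Γ, iΓ, fun n => (y n).toList, fun n => (y n).toList_length, Q, iQ, M, ε, hε0, hε2, hy⟩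
end

section
/- If a language A over a nonempty finite alphabet Σ is REG/n-pseudorandom, then the distributional problem (A, μ_uni) is not in aver-REG/n, where μ_uni = {μ_uni,n} is the uniform probability ensemble (each μ_uni,n is the uniform distribution on Σ^n). -/
open scoped BigOperators

/-! A decider `M` with advice `h` for `(A, μ_uni)` yields the REG/n language
`B = {x | M accepts [x//h(|x|)]}`, which agrees with `A` on a `1 - ε` fraction of `Σ^n` for
every `n`. So the density of `B △ A` in `Σ^n` stays at least `1/2 - ε > 0` away from `1/2`,
which a negligible function cannot do. -/

open Finset

theorem Negligible.exists_lt {f : ℕ → ℝ} (hf : Negligible f) {δ : ℝ} (hδ : 0 < δ) :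
    ∃ n, f n < δ := by
  obtain ⟨N, hN⟩ := hf 1 one_pos
  obtain ⟨m, hm⟩ := exists_nat_gt (1 / δ)
  have hm_pos : (0 : ℝ) < m := (one_div_pos.2 hδ).trans hm
  refine ⟨max N m, (hN _ (le_max_left N m)).trans_lt ?_⟩
  have hmn : (m : ℝ) ≤ (max N m : ℕ) := by exact_mod_cast le_max_right N m
  rw [pow_one, one_div_lt (hm_pos.trans_le hmn) hδ]
  exact hm.trans_le hmn

theorem List.Vector.range_toList (α : Type*) (n : ℕ) :
    Set.range (List.Vector.toList (α := α) (n := n)) = {x | x.length = n} :=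
  Set.ext fun x => ⟨by rintro ⟨v, rfl⟩; exact v.toList_length, fun hx => ⟨⟨x, hx⟩, rfl⟩⟩

theorem ncard_inter_setOf_length_eq {α : Type*} [Fintype α] (S : Set (List α)) (n : ℕ)
    [DecidablePred (· ∈ S)] :
    (S ∩ {x | x.length = n}).ncard = #{v : List.Vector α n | v.toList ∈ S} := by
  rw [← List.Vector.range_toList, ← Set.image_preimage_eq_inter_range,
    Set.ncard_image_of_injective _ List.Vector.toList_injective, ← Set.ncard_coe_finset]
  simp [Set.preimage]

theorem card_compl_div_card_le {β : Type*} [Fintype β] [DecidableEq β] (s : Finset β) {ε : ℝ}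
    (h : 1 - ε ≤ #s / Fintype.card β) : (#sᶜ : ℝ) / Fintype.card β ≤ ε := by
  rw [card_compl, Nat.cast_sub (card_le_univ s)]
  rcases eq_or_ne (Fintype.card β : ℝ) 0 with h0 | h0
  · simp only [h0, div_zero] at h ⊢
    linarith
  · rw [sub_div, div_self h0]
    linarith

open Classical in
theorem ncard_symmDiff_inter_length_div_le {α : Type*} [Fintype α] (A B : Set (List α))
    {ε : ℝ} (n : ℕ)
    (h : 1 - ε ≤ ∑ x : List.Vector α n,
      if (x.toList ∈ B ↔ x.toList ∈ A) then ((Fintype.card α : ℝ) ^ n)⁻¹ else 0) :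
    ((symmDiff B A ∩ {x | x.length = n}).ncard : ℝ) / (Fintype.card α : ℝ) ^ n ≤ ε := by
  set good : Finset (List.Vector α n) := {x | (x.toList ∈ B ↔ x.toList ∈ A)}
  have hbad : #{v : List.Vector α n | v.toList ∈ symmDiff B A} = #goodᶜ := by
    rw [compl_filter]
    congr! 2 with v
    exact Set.mem_symmDiff.trans (xor_iff_not_iff _ _)
  rw [ncard_inter_setOf_length_eq, hbad, ← Nat.cast_pow, ← card_vector]
  apply card_compl_div_card_le
  rwa [← sum_filter, sum_const, nsmul_eq_mul, ← div_eq_mul_inv, ← Nat.cast_pow,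
    ← card_vector] at h

theorem stmt17_general (Alp : Type) [Fintype Alp] (A : Set (List Alp))
    (hA : RegPseudorandom A) :
    ¬ InAverREGn A (fun n _ => ((Fintype.card Alp : ℝ) ^ n)⁻¹) := by
  rintro ⟨Γ, iΓ, h, hlen, Q, iQ, M, ε, -, hε, hcorrect⟩
  set B : Set (List Alp) := {x | x.zip (h x.length) ∈ M.accepts}
  have hB : InREGn B := ⟨Γ, iΓ, h, hlen, Q, iQ, M, fun _ => Iff.rfl⟩
  obtain ⟨n, hn⟩ := (hA B hB).exists_lt (sub_pos.2 hε)
  have hdensity := ncard_symmDiff_inter_length_div_le A B n <| by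
    convert hcorrect n using 4 with x
    simp [B, x.toList_length]
  rw [abs_sub_comm, abs_of_nonneg (by linarith)] at hn
  linarith

theorem stmt17 (Alp : Type) [Fintype Alp] [Nonempty Alp] (A : Set (List Alp))
    (hA : RegPseudorandom A) :
    ¬ InAverREGn A (fun n _ => ((Fintype.card Alp : ℝ) ^ n)⁻¹) :=
  stmt17_general Alp A hA
end

section
/- For any language A over a finite alphabet Σ, the following are equivalent: (1) A is in REG/Rn; (2) there exist a finite advice alphabet Γ, a DFA M over Σ × Γ, and an error bound ε ∈ [0,1/2) such that for every probability ensemble {μ_n} over Σ* there exists an advice function h : ℕ → Γ* with |h(n)| = n satisfying, for every n, Pr_{x∼μ_n}[(M accepts [x//h(n)]) ↔ x ∈ A] ≥ 1 − ε. -/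
open scoped BigOperators

/-
(1) ⇒ (2) is an averaging argument: if random advice decides every input correctly with
probability at least `1 - ε`, then for every input distribution some fixed advice string is
correct on a set of inputs of mass at least `1 - ε`.

(2) ⇒ (1) is Yao's principle. Let one player choose the input `x` and the other the advice `y`,
with payoff `1` when `M` decides `x ∈ A` correctly on `[x//y]`. Hypothesis (2) gives a pure reply
of value at least `1 - ε` to every mixed input strategy, so by von Neumann's minimax theorem some
mixed advice strategy guarantees `1 - ε` against every input: this is randomized advice for `A`.
Over an empty alphabet (2) says nothing about `Γ`, and a trivial machine is used instead.
-/

section Game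

open Matrix

variable {X Y : Type*} [Fintype X] [Fintype Y]

theorem le_dotProduct_of_mem_stdSimplex {w v : X → ℝ} {c : ℝ} (hw : w ∈ stdSimplex ℝ X)
    (hv : ∀ i, c ≤ v i) : c ≤ w ⬝ᵥ v :=
  calc c = ∑ i, w i * c := by rw [← Finset.sum_mul, hw.2, one_mul]
    _ ≤ w ⬝ᵥ v := Finset.sum_le_sum fun i _ => mul_le_mul_of_nonneg_left (hv i) (hw.1 i)

theorem dotProduct_le_of_mem_stdSimplex {w v : X → ℝ} {c : ℝ} (hw : w ∈ stdSimplex ℝ X)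
    (hv : ∀ i, v i ≤ c) : w ⬝ᵥ v ≤ c :=
  calc w ⬝ᵥ v ≤ ∑ i, w i * c :=
        Finset.sum_le_sum fun i _ => mul_le_mul_of_nonneg_left (hv i) (hw.1 i)
    _ = c := by rw [← Finset.sum_mul, hw.2, one_mul]

theorem Matrix.exists_le_vecMul_of_forall_le_mulVec (C : Matrix X Y ℝ) {c : ℝ} {ν : Y → ℝ}
    (hν : ν ∈ stdSimplex ℝ Y) (hC : ∀ x, c ≤ (C *ᵥ ν) x) {μ : X → ℝ}
    (hμ : μ ∈ stdSimplex ℝ X) : ∃ y, c ≤ (μ ᵥ* C) y := by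
  have : Nonempty Y := by
    by_contra h
    simpa [not_nonempty_iff.mp h] using hν.2
  obtain ⟨y, -, hy⟩ := Finset.exists_max_image Finset.univ (μ ᵥ* C) Finset.univ_nonempty
  refine ⟨y, ?_⟩
  calc c ≤ μ ⬝ᵥ (C *ᵥ ν) := le_dotProduct_of_mem_stdSimplex hμ hC
    _ = ν ⬝ᵥ (μ ᵥ* C) := by rw [dotProduct_mulVec, dotProduct_comm]
    _ ≤ (μ ᵥ* C) y := dotProduct_le_of_mem_stdSimplex hν fun y' => hy y' (Finset.mem_univ _)

/-- A saddle point of `μ ⬝ᵥ C *ᵥ ν` on the product of the two simplices, provided by Sion's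
minimax theorem, gives `ν`. -/
theorem Matrix.exists_mem_stdSimplex_forall_le_mulVec [Nonempty X] [Nonempty Y]
    (C : Matrix X Y ℝ) {c : ℝ} (hC : ∀ μ ∈ stdSimplex ℝ X, ∃ y, c ≤ (μ ᵥ* C) y) :
    ∃ ν ∈ stdSimplex ℝ Y, ∀ x, c ≤ (C *ᵥ ν) x := by
  classical
  let B : (X → ℝ) →ₗ[ℝ] (Y → ℝ) →ₗ[ℝ] ℝ := toLinearMap₂' ℝ C
  obtain ⟨μ, hμ, ν, hν, hsaddle⟩ := Sion.exists_isSaddlePointOn (f := fun μ ν => B μ ν)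
    ⟨_, single_mem_stdSimplex ℝ (Classical.arbitrary X)⟩ (convex_stdSimplex ℝ X)
    (isCompact_stdSimplex ℝ X)
    (fun ν _ =>
      (LinearMap.continuous_of_finiteDimensional (B.flip ν)).continuousOn.lowerSemicontinuousOn)
    (fun ν _ => ((B.flip ν).convexOn (convex_stdSimplex ℝ X)).quasiconvexOn)
    (convex_stdSimplex ℝ Y) ⟨_, single_mem_stdSimplex ℝ (Classical.arbitrary Y)⟩
    (isCompact_stdSimplex ℝ Y)
    (fun μ _ =>
      (LinearMap.continuous_of_finiteDimensional (B μ)).continuousOn.upperSemicontinuousOn)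
    (fun μ _ => ((B μ).concaveOn (convex_stdSimplex ℝ Y)).quasiconcaveOn)
  refine ⟨ν, hν, fun x => ?_⟩
  obtain ⟨y, hy⟩ := hC μ hμ
  have hxy := hsaddle _ (single_mem_stdSimplex ℝ x) _ (single_mem_stdSimplex ℝ y)
  simp only [B, toLinearMap₂'_apply', mulVec_single_one, single_one_dotProduct] at hxy
  exact hy.trans hxy

end Game

section Advice

open Classical Matrix

variable {Alp Γ Q : Type}

noncomputable def DFA.successMatrix (M : DFA (Alp × Γ) Q) (A : Set (List Alp)) (n : ℕ) :
    Matrix (List.Vector Alp n) (List.Vector Γ n) ℝ :=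
  fun x y => if (x.toList.zip y.toList ∈ M.accepts ↔ x.toList ∈ A) then 1 else 0

variable (M : DFA (Alp × Γ) Q) (A : Set (List Alp)) {n : ℕ}

theorem DFA.vecMul_successMatrix [Fintype Alp] (μ : List.Vector Alp n → ℝ)
    (y : List.Vector Γ n) :
    (μ ᵥ* M.successMatrix A n) y =
      ∑ x, if (x.toList.zip y.toList ∈ M.accepts ↔ x.toList ∈ A) then μ x else 0 := by
  simp only [vecMul, dotProduct, DFA.successMatrix, mul_boole]

variable [Fintype Γ]

theorem DFA.mulVec_successMatrix_of_mem {x : List.Vector Alp n} (hx : x.toList ∈ A)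
    (D : List.Vector Γ n → ℝ) :
    (M.successMatrix A n *ᵥ D) x = randAccProb M.accepts D x.toList := by
  unfold randAccProb mulVec dotProduct DFA.successMatrix
  refine Finset.sum_congr rfl fun y _ => ?_
  dsimp only
  split_ifs with hcorrect hacc hacc
  · exact one_mul _
  · exact absurd (hcorrect.2 hx) hacc
  · exact absurd (iff_of_true hacc hx) hcorrect
  · exact zero_mul _

theorem DFA.mulVec_successMatrix_of_notMem {x : List.Vector Alp n} (hx : x.toList ∉ A)
    {D : List.Vector Γ n → ℝ} (hD : IsDist D) :
    (M.successMatrix A n *ᵥ D) x = 1 - randAccProb M.accepts D x.toList := by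
  rw [eq_sub_iff_add_eq, ← hD.2]
  unfold randAccProb mulVec dotProduct DFA.successMatrix
  rw [← Finset.sum_add_distrib]
  refine Finset.sum_congr rfl fun y _ => ?_
  dsimp only
  split_ifs with hcorrect hacc hacc
  · exact absurd (hcorrect.1 hacc) hx
  · ring
  · ring
  · exact absurd (iff_of_false hacc hx) hcorrect

theorem DFA.boundedError_iff_le_mulVec_successMatrix {D : List.Vector Γ n → ℝ} (hD : IsDist D)
    (x : List.Vector Alp n) (ε : ℝ) :
    ((x.toList ∈ A → 1 - ε ≤ randAccProb M.accepts D x.toList) ∧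
        (x.toList ∉ A → randAccProb M.accepts D x.toList ≤ ε)) ↔
      1 - ε ≤ (M.successMatrix A n *ᵥ D) x := by
  by_cases hx : x.toList ∈ A
  · simp [M.mulVec_successMatrix_of_mem A hx, hx]
  · simp only [M.mulVec_successMatrix_of_notMem A hx hD, hx, false_imp_iff, true_and,
      not_false_eq_true, true_imp_iff]
    constructor <;> intro h <;> linarith

end Advice

theorem isDist_update {Γ : Type} [Fintype Γ] {D : (n : ℕ) → List.Vector Γ n → ℝ}
    (hD : ∀ n, IsDist (D n)) {n : ℕ} {ν : List.Vector Γ n → ℝ} (hν : IsDist ν) (m : ℕ) :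
    IsDist (Function.update D n ν m) := by
  rcases eq_or_ne m n with rfl | hm
  · simpa using hν
  · simpa [hm] using hD m

open Classical in
theorem DFA.exists_randomAdvice_of_forall_exists_advice {Alp Γ Q : Type} [Fintype Alp]
    [Nonempty Alp] [Fintype Γ] (M : DFA (Alp × Γ) Q) (A : Set (List Alp)) {ε : ℝ}
    (hdet : ∀ μ : (n : ℕ) → List.Vector Alp n → ℝ, (∀ n, IsDist (μ n)) →
      ∃ h : ℕ → List Γ, (∀ n, (h n).length = n) ∧
        ∀ n : ℕ, 1 - ε ≤ ∑ x : List.Vector Alp n,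
          if (x.toList.zip (h n) ∈ M.accepts ↔ x.toList ∈ A) then μ n x else 0)
    (n : ℕ) :
    ∃ ν ∈ stdSimplex ℝ (List.Vector Γ n),
      ∀ x, 1 - ε ≤ Matrix.mulVec (M.successMatrix A n) ν x := by
  obtain ⟨a⟩ := ‹Nonempty Alp›
  let δ : (n : ℕ) → List.Vector Alp n → ℝ :=
    fun n => (if List.Vector.replicate n a = · then 1 else 0)
  have hδ : ∀ n, IsDist (δ n) := fun n => ite_eq_mem_stdSimplex ℝ _
  have : Nonempty (List.Vector Alp n) := ⟨List.Vector.replicate n a⟩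
  obtain ⟨h₀, hlen₀, -⟩ := hdet δ hδ
  have : Nonempty (List.Vector Γ n) := ⟨⟨h₀ n, hlen₀ n⟩⟩
  refine (M.successMatrix A n).exists_mem_stdSimplex_forall_le_mulVec fun μ hμ => ?_
  -- (2) only speaks about whole ensembles, so `μ` is planted at length `n` into `δ`.
  obtain ⟨h, hlen, hh⟩ := hdet (Function.update δ n μ) (isDist_update hδ hμ)
  have hμ_correct := hh n
  rw [Function.update_self] at hμ_correct
  exact ⟨⟨h n, hlen n⟩,
    hμ_correct.trans_eq (M.vecMul_successMatrix A μ ⟨h n, hlen n⟩).symm⟩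

theorem inREGRn_of_isEmpty {Alp : Type} [IsEmpty Alp] (A : Set (List Alp)) :
    InREGRn A := by
  classical
  let M : DFA (Alp × Unit) Unit := ⟨fun _ _ => (), (), {_q | [] ∈ A}⟩
  let D : (n : ℕ) → List.Vector Unit n → ℝ :=
    fun n => (if List.Vector.replicate n () = · then 1 else 0)
  have hD : ∀ n, IsDist (D n) := fun n => ite_eq_mem_stdSimplex ℝ _
  refine ⟨Unit, inferInstance, Unit, inferInstance, M, 0, le_rfl, by norm_num, D, hD,
    fun n x hx => (M.boundedError_iff_le_mulVec_successMatrix A (hD n) ⟨x, hx⟩ 0).2 ?_⟩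
  have hsuccess : ∀ y, M.successMatrix A n ⟨x, hx⟩ y = 1 := fun y =>
    if_pos (show x.zip y.toList ∈ M.accepts ↔ x ∈ A by
      rw [Subsingleton.elim x []]; exact Iff.rfl)
  simp [Matrix.mulVec, dotProduct, hsuccess, (hD n).2]

open Classical in
theorem stmt18 (Alp : Type) [Fintype Alp] (A : Set (List Alp)) :
    InREGRn A ↔
      ∃ (Γ : Type) (iΓ : Fintype Γ),
        letI := iΓ
        ∃ (Q : Type) (_ : Fintype Q) (M : DFA (Alp × Γ) Q) (ε : ℝ),
          0 ≤ ε ∧ ε < 1 / 2 ∧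
          ∀ μ : (n : ℕ) → List.Vector Alp n → ℝ, (∀ n, IsDist (μ n)) →
            ∃ h : ℕ → List Γ, (∀ n, (h n).length = n) ∧
              ∀ n : ℕ, 1 - ε ≤ ∑ x : List.Vector Alp n,
                if (x.toList.zip (h n) ∈ M.accepts ↔ x.toList ∈ A) then μ n x else 0 := by
  constructor
  · rintro ⟨Γ, iΓ, Q, iQ, M, ε, hε0, hε, D, hD, hD_correct⟩
    refine ⟨Γ, iΓ, Q, iQ, M, ε, hε0, hε, fun μ hμ => ?_⟩
    have hadvice : ∀ n, ∃ y, 1 - ε ≤ Matrix.vecMul (μ n) (M.successMatrix A n) y := fun n =>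
      (M.successMatrix A n).exists_le_vecMul_of_forall_le_mulVec (hD n)
        (fun x => (M.boundedError_iff_le_mulVec_successMatrix A (hD n) x ε).1
          (hD_correct n _ x.toList_length))
        (hμ n)
    choose y hy using hadvice
    exact ⟨fun n => (y n).toList, fun n => (y n).toList_length,
      fun n => (M.vecMul_successMatrix A (μ n) (y n)) ▸ hy n⟩
  · rintro ⟨Γ, iΓ, Q, iQ, M, ε, hε0, hε, hdet⟩
    cases isEmpty_or_nonempty Alp
    · exact inREGRn_of_isEmpty A
    choose D hD hD_correct using M.exists_randomAdvice_of_forall_exists_advice A hdet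
    exact ⟨Γ, iΓ, Q, iQ, M, ε, hε0, hε, D, hD, fun n x hx =>
      (M.boundedError_iff_le_mulVec_successMatrix A (hD n) ⟨x, hx⟩ ε).2 (hD_correct n _)⟩
end
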